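/- Suppose n intervals are such that a single interval j has the largest lower bound and does not overlap some intervals, with the remaining n−1 intervals all pairwise overlapping; partition the others into X = intervals overlapping j and B = intervals strictly below j. If |X| = k−1 and |B| = n−k ≥ 2, then interval j lies in every feasible top-k set, and the feasible top-k sets are exactly {j} ∪ A for A ⊆ X ∪ B with |A| = k−1; consequently the maximin optimal marginals are p_j = 1 and p_i = (k−1)/(n−1) for all i ≠ j, which is not a 0-1 vector. -/

import Mathlib

/-!
Every interval other than `j` overlaps every other interval, so the only strict dominances are
`j` over the intervals of `B`. A feasible top-`k` set missing `j` would lie in `X ∪ B` and, being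
larger than `X`, contain some `b ∈ B` ranked below `k` while `j` is not — impossible as `j` must be
ranked above `b`. Conversely any `k`-set containing `j` is realised by ranking `j` first. Hence the
feasible sets are `{j} ∪ A`, `A` a `(k-1)`-subset of the other `n - 1` intervals. Against such a
family a marginal vector `p` gets at most `p j` plus the mass of the `k - 1` cheapest other
intervals, which by averaging is at most `(k-1)/(n-1)` of `k - p j`; since `p j ≤ 1` this is at most
`1 + (k-1)²/(n-1)`, the value that `p j = 1`, `p i = (k-1)/(n-1)` attains on every feasible set.
-/

/-- Rankings consistent with strict interval dominance. -/
def FeasiblePerm (n : ℕ) (l u : Fin n → ℝ) : Set (Equiv.Perm (Fin n)) :=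
  {σ | ∀ i j : Fin n, l i > u j → σ i < σ j}

/-- Feasible top-`k` sets (0-indexed ranks). -/
def FeasibleTopK (n k : ℕ) (l u : Fin n → ℝ) : Set (Finset (Fin n)) :=
  {T | T.card = k ∧ ∃ σ ∈ FeasiblePerm n l u, ∀ j ∈ T, (σ j : ℕ) < k}

/-- Worst-case objective. -/
noncomputable def wcObj (n k : ℕ) (l u : Fin n → ℝ) (p : Fin n → ℝ) : ℝ :=
  sInf {x : ℝ | ∃ T ∈ FeasibleTopK n k l u, x = ∑ i ∈ T, p i}

open Finset

theorem Finset.exists_subset_card_eq_mul_sum_le {α : Type*} [DecidableEq α] (p : α → ℝ) :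
    ∀ {r : ℕ} {S : Finset α}, r ≤ S.card →
      ∃ A ⊆ S, A.card = r ∧ (S.card : ℝ) * ∑ i ∈ A, p i ≤ r * ∑ i ∈ S, p i := by
  intro r
  induction r with
  | zero => exact fun _ => ⟨∅, empty_subset _, rfl, by simp⟩
  | succ r ih =>
    intro S hr
    rcases hr.eq_or_lt with heq | hlt
    · exact ⟨S, Subset.rfl, heq.symm, by rw [heq]⟩
    -- a cheapest element of `S` costs at most the average, so it can join a good `r`-subset of the rest
    obtain ⟨i, hiS, hmin⟩ := S.exists_min_image p (card_pos.1 (by omega))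
    have hcard : (S.erase i).card = S.card - 1 := card_erase_of_mem hiS
    obtain ⟨A, hA, hAcard, hAsum⟩ := ih (S := S.erase i) (by omega)
    have hiA : i ∉ A := fun h => (mem_erase.1 (hA h)).1 rfl
    refine ⟨insert i A, insert_subset hiS (hA.trans (erase_subset i S)),
      by rw [card_insert_of_notMem hiA, hAcard], ?_⟩
    have hS : ∑ x ∈ S, p x = p i + ∑ x ∈ S.erase i, p x := (add_sum_erase S p hiS).symm
    have hpi : (S.card : ℝ) * p i ≤ ∑ x ∈ S, p x := by
      simpa [nsmul_eq_mul] using card_nsmul_le_sum S p (p i) hmin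
    rw [hcard, Nat.cast_sub (by omega), Nat.cast_one, ← sub_eq_of_eq_add' hS] at hAsum
    rw [sum_insert hiA]
    have hrm : (r : ℝ) + 2 ≤ S.card := by exact_mod_cast (hlt : r + 2 ≤ S.card)
    set m : ℝ := (S.card : ℝ)
    have key : (m - 1) * (m * (p i + ∑ x ∈ A, p x)) ≤ (m - 1) * ((r + 1 : ℕ) * ∑ x ∈ S, p x) := by
      push_cast
      nlinarith [mul_le_mul_of_nonneg_left hAsum (by linarith : (0 : ℝ) ≤ m),
        mul_le_mul_of_nonneg_left hpi (by linarith : (0 : ℝ) ≤ m - 1 - r)]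
    exact le_of_mul_le_mul_left key (by linarith)

theorem Fintype.sum_ite_eq_add_mul {ι : Type*} [Fintype ι] [DecidableEq ι] (j : ι) (a c : ℝ) :
    ∑ i, (if i = j then a else c) = a + (Fintype.card ι - 1) * c := by
  rw [← add_sum_erase _ _ (mem_univ j), if_pos rfl,
    Finset.sum_congr rfl fun i hi => if_neg (ne_of_mem_erase hi), sum_const,
    card_erase_of_mem (mem_univ j), card_univ, nsmul_eq_mul,
    Nat.cast_sub (Fintype.card_pos_iff.2 ⟨j⟩), Nat.cast_one]

theorem exists_perm_val_eq_zero_and_lt_card {n : ℕ} (S : Finset (Fin n)) {j : Fin n}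
    (hj : j ∈ S) : ∃ σ : Equiv.Perm (Fin n), (σ j : ℕ) = 0 ∧ ∀ t ∈ S, (σ t : ℕ) < S.card := by
  have hcard : Fintype.card S = Fintype.card {i : Fin n // (i : ℕ) < S.card} := by
    rw [Fintype.card_coe, Fintype.card_fin_lt_of_le (card_le_univ S |>.trans_eq (Fintype.card_fin n))]
  let e₀ := Fintype.equivOfCardEq hcard
  let e := e₀.trans (Equiv.swap (e₀ ⟨j, hj⟩) ⟨⟨0, j.pos⟩, card_pos.2 ⟨j, hj⟩⟩)
  refine ⟨e.extendSubtype, ?_, fun t ht => ?_⟩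
  · rw [Equiv.extendSubtype_apply_of_mem e j hj]
    simp [e]
  · rw [Equiv.extendSubtype_apply_of_mem e t ht]
    exact (e ⟨t, ht⟩).2

theorem mem_of_val_lt_of_forall_val_lt {n k : ℕ} {T : Finset (Fin n)} (hT : T.card = k)
    {σ : Equiv.Perm (Fin n)} (hσ : ∀ t ∈ T, (σ t : ℕ) < k) {i : Fin n} (hi : (σ i : ℕ) < k) :
    i ∈ T := by
  by_contra hiT
  have hle : (insert i T).card ≤ (range k).card := by
    refine card_le_card_of_injOn (fun t => (σ t : ℕ)) (fun t ht => ?_)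
      fun a _ b _ h => σ.injective (Fin.ext h)
    rcases mem_insert.1 ht with rfl | ht
    · exact mem_range.2 hi
    · exact mem_range.2 (hσ t ht)
  rw [card_insert_of_notMem hiT, hT, card_range] at hle
  omega

section FeasibleTopK

variable {n k : ℕ} {l u : Fin n → ℝ}

theorem mem_of_mem_feasibleTopK_of_gt {T : Finset (Fin n)} (hT : T ∈ FeasibleTopK n k l u)
    {a b : Fin n} (hab : l a > u b) (hb : b ∈ T) : a ∈ T := by
  obtain ⟨hcard, σ, hσ, htop⟩ := hT
  exact mem_of_val_lt_of_forall_val_lt hcard htop (Nat.lt_trans (hσ a b hab) (htop b hb))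

def IsSoleDominator (l u : Fin n → ℝ) (j : Fin n) : Prop :=
  ∀ a b, l a > u b → a = j ∧ b ≠ j

variable {j : Fin n}

theorem IsSoleDominator.mem_feasibleTopK (hj : IsSoleDominator l u j) {T : Finset (Fin n)}
    (hT : T.card = k) (hjT : j ∈ T) : T ∈ FeasibleTopK n k l u := by
  obtain ⟨σ, hσj, hσT⟩ := exists_perm_val_eq_zero_and_lt_card T hjT
  refine ⟨hT, σ, fun a b hab => ?_, hT ▸ hσT⟩
  obtain ⟨rfl, hba⟩ := hj a b hab
  show (σ a : ℕ) < σ b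
  rw [hσj]
  exact Nat.pos_of_ne_zero fun h => hba (σ.injective (Fin.ext (h.trans hσj.symm)))

theorem IsSoleDominator.feasibleTopK_eq (hj : IsSoleDominator l u j) (hk : 1 ≤ k)
    (hmem : ∀ T ∈ FeasibleTopK n k l u, j ∈ T) :
    FeasibleTopK n k l u = {T | ∃ A ⊆ univ.erase j, A.card = k - 1 ∧ T = insert j A} := by
  ext T
  constructor
  · intro hT
    have hjT := hmem T hT
    exact ⟨T.erase j, erase_subset_erase j (subset_univ T),
      by rw [card_erase_of_mem hjT, hT.1], (insert_erase hjT).symm⟩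
  · rintro ⟨A, hA, hAcard, rfl⟩
    have hjA : j ∉ A := fun h => (mem_erase.1 (hA h)).1 rfl
    exact hj.mem_feasibleTopK (by rw [card_insert_of_notMem hjA]; omega) (mem_insert_self j A)

theorem isSoleDominator_of_pairwise_overlap (hvalid : ∀ i, l i ≤ u i)
    (hjtop : ∀ i, l i ≤ l j) {X B : Finset (Fin n)} (hpart : X ∪ B = univ.erase j)
    (hrest : ∀ x ∈ X ∪ B, ∀ y ∈ X ∪ B, x ≠ y → l x ≤ u y) : IsSoleDominator l u j := by
  have hother : ∀ i, i ≠ j → i ∈ X ∪ B := fun i hi => hpart ▸ mem_erase.2 ⟨hi, mem_univ i⟩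
  intro a b hab
  have hbj : b ≠ j := by
    rintro rfl
    linarith [hjtop a, hvalid b]
  refine ⟨by_contra fun haj => ?_, hbj⟩
  have hne : a ≠ b := by
    rintro rfl
    linarith [hvalid a]
  linarith [hrest a (hother a haj) b (hother b hbj) hne]

theorem top_mem_of_mem_feasibleTopK {X B : Finset (Fin n)} (hk : 1 ≤ k)
    (hpart : X ∪ B = univ.erase j) (hB : ∀ b ∈ B, l j > u b) (hXcard : X.card = k - 1)
    {T : Finset (Fin n)} (hT : T ∈ FeasibleTopK n k l u) : j ∈ T := by
  by_contra hjT
  obtain ⟨b, hbT, hbX⟩ : ∃ b ∈ T, b ∉ X := not_subset.1 fun hTX => by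
    have := card_le_card hTX
    rw [hT.1, hXcard] at this
    omega
  have hbXB : b ∈ X ∪ B := hpart ▸ mem_erase.2 ⟨ne_of_mem_of_not_mem hbT hjT, mem_univ b⟩
  have hbB : b ∈ B := (mem_union.1 hbXB).resolve_left hbX
  exact hjT (mem_of_mem_feasibleTopK_of_gt hT (hB b hbB) hbT)

theorem wcObj_le_sum (p : Fin n → ℝ) {T : Finset (Fin n)} (hT : T ∈ FeasibleTopK n k l u) :
    wcObj n k l u p ≤ ∑ i ∈ T, p i := by
  refine csInf_le (Set.Finite.bddBelow ?_) ⟨T, hT, rfl⟩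
  refine ((Set.toFinite (FeasibleTopK n k l u)).image fun T => ∑ i ∈ T, p i).subset ?_
  rintro x ⟨T, hT, rfl⟩
  exact ⟨T, hT, rfl⟩

theorem wcObj_eq_of_forall_sum_eq {p : Fin n → ℝ} {v : ℝ} {T₀ : Finset (Fin n)}
    (hT₀ : T₀ ∈ FeasibleTopK n k l u) (h : ∀ T ∈ FeasibleTopK n k l u, ∑ i ∈ T, p i = v) :
    wcObj n k l u p = v := by
  have hset : {x : ℝ | ∃ T ∈ FeasibleTopK n k l u, x = ∑ i ∈ T, p i} = {v} := by
    ext x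
    simp only [Set.mem_ofPred_eq, Set.mem_singleton_iff]
    constructor
    · rintro ⟨T, hT, rfl⟩
      exact h T hT
    · rintro rfl
      exact ⟨T₀, hT₀, (h T₀ hT₀).symm⟩
  rw [wcObj, hset, csInf_singleton]

variable (hF : FeasibleTopK n k l u = {T | ∃ A ⊆ univ.erase j, A.card = k - 1 ∧ T = insert j A})
include hF

theorem wcObj_ite_of_feasibleTopK_eq (hk : 1 ≤ k) (hkn : k ≤ n) (c : ℝ) :
    wcObj n k l u (fun i => if i = j then 1 else c) = 1 + ((k : ℝ) - 1) * c := by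
  obtain ⟨A₀, hA₀, hA₀card⟩ := exists_subset_card_eq (s := univ.erase j) (n := k - 1)
    (by rw [card_erase_of_mem (mem_univ j), card_univ, Fintype.card_fin]; omega)
  refine wcObj_eq_of_forall_sum_eq (T₀ := insert j A₀) (by rw [hF]; exact ⟨A₀, hA₀, hA₀card, rfl⟩)
    fun T hT => ?_
  rw [hF] at hT
  obtain ⟨A, hA, hAcard, rfl⟩ := hT
  have hjA : j ∉ A := fun h => (mem_erase.1 (hA h)).1 rfl
  rw [sum_insert hjA, if_pos rfl, sum_congr rfl fun i hi => if_neg (ne_of_mem_of_not_mem hi hjA),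
    sum_const, hAcard, nsmul_eq_mul, Nat.cast_sub hk, Nat.cast_one]

theorem wcObj_le_of_feasibleTopK_eq (hk : 1 ≤ k) (hkn : k < n) {p : Fin n → ℝ}
    (hpj : p j ≤ 1) (hsum : ∑ i, p i = k) :
    wcObj n k l u p ≤ 1 + ((k : ℝ) - 1) ^ 2 / ((n : ℝ) - 1) := by
  obtain ⟨A, hA, hAcard, hAsum⟩ := (univ.erase j).exists_subset_card_eq_mul_sum_le p (r := k - 1)
    (by rw [card_erase_of_mem (mem_univ j), card_univ, Fintype.card_fin]; omega)
  have hjA : j ∉ A := fun h => (mem_erase.1 (hA h)).1 rfl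
  have hle := wcObj_le_sum p (T := insert j A) (by rw [hF]; exact ⟨A, hA, hAcard, rfl⟩)
  rw [sum_insert hjA] at hle
  have hothers : ∑ i ∈ univ.erase j, p i = k - p j := by
    rw [← hsum, ← add_sum_erase univ p (mem_univ j)]
    ring
  rw [card_erase_of_mem (mem_univ j), card_univ, Fintype.card_fin, hothers,
    Nat.cast_sub (by omega), Nat.cast_sub hk, Nat.cast_one] at hAsum
  have hk' : (1 : ℝ) ≤ k := by exact_mod_cast hk
  have hkn' : (k : ℝ) + 1 ≤ n := by exact_mod_cast hkn
  refine hle.trans ?_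
  rw [← sub_le_iff_le_add', le_div_iff₀ (by linarith)]
  nlinarith [mul_le_mul_of_nonneg_right hpj (by linarith : (0 : ℝ) ≤ n - k)]

end FeasibleTopK

theorem single_top_interval_optimal_general (n k : ℕ) (hk : 2 ≤ k) (hkn : k + 2 ≤ n)
    (l u : Fin n → ℝ) (hvalid : ∀ i, l i ≤ u i)
    (j : Fin n) (X B : Finset (Fin n))
    (hpart : X ∪ B = Finset.univ.erase j)
    (hjtop : ∀ i : Fin n, l i ≤ l j)
    (hB : ∀ b ∈ B, l j > u b)
    (hrest : ∀ x ∈ X ∪ B, ∀ y ∈ X ∪ B, x ≠ y → l x ≤ u y)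
    (hXcard : X.card = k - 1) :
    (∀ T ∈ FeasibleTopK n k l u, j ∈ T) ∧
    (FeasibleTopK n k l u =
      {T | ∃ A ⊆ X ∪ B, A.card = k - 1 ∧ T = insert j A}) ∧
    ((∀ i, 0 ≤ (fun i : Fin n => if i = j then (1 : ℝ) else ((k : ℝ) - 1) / ((n : ℝ) - 1)) i ∧
        (fun i : Fin n => if i = j then (1 : ℝ) else ((k : ℝ) - 1) / ((n : ℝ) - 1)) i ≤ 1) ∧
      (∑ i, (fun i : Fin n => if i = j then (1 : ℝ) else ((k : ℝ) - 1) / ((n : ℝ) - 1)) i = (k : ℝ)) ∧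
      (∀ p : Fin n → ℝ, (∀ i, 0 ≤ p i ∧ p i ≤ 1) → ∑ i, p i = (k : ℝ) →
        wcObj n k l u p ≤
          wcObj n k l u (fun i => if i = j then (1 : ℝ) else ((k : ℝ) - 1) / ((n : ℝ) - 1)))) ∧
    (∃ i : Fin n,
      (fun i : Fin n => if i = j then (1 : ℝ) else ((k : ℝ) - 1) / ((n : ℝ) - 1)) i ≠ 0 ∧
      (fun i : Fin n => if i = j then (1 : ℝ) else ((k : ℝ) - 1) / ((n : ℝ) - 1)) i ≠ 1) := by
  have hmem : ∀ T ∈ FeasibleTopK n k l u, j ∈ T := fun T =>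
    top_mem_of_mem_feasibleTopK (by omega) hpart hB hXcard
  have hF := (isSoleDominator_of_pairwise_overlap hvalid hjtop hpart hrest).feasibleTopK_eq
    (by omega) hmem
  have hk' : (2 : ℝ) ≤ k := by exact_mod_cast hk
  have hkn' : (k : ℝ) + 2 ≤ n := by exact_mod_cast hkn
  have hc0 : 0 < ((k : ℝ) - 1) / ((n : ℝ) - 1) := div_pos (by linarith) (by linarith)
  have hc1 : ((k : ℝ) - 1) / ((n : ℝ) - 1) < 1 := (div_lt_one (by linarith)).2 (by linarith)
  refine ⟨hmem, hpart ▸ hF, ⟨fun i => ?_, ?_, fun p hp hsum => ?_⟩, ?_⟩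
  · beta_reduce
    split_ifs <;> constructor <;> linarith
  · rw [Fintype.sum_ite_eq_add_mul, Fintype.card_fin, mul_div_cancel₀ _ (by linarith)]
    ring
  · rw [wcObj_ite_of_feasibleTopK_eq hF (by omega) (by omega), ← mul_div_assoc, ← sq]
    exact wcObj_le_of_feasibleTopK_eq hF (by omega) (by omega) (hp j).2 hsum
  · obtain ⟨i, hi⟩ := Fintype.exists_ne_of_one_lt_card (by simp; omega : 1 < Fintype.card (Fin n)) j
    exact ⟨i, by simpa [hi] using hc0.ne', by simpa [hi] using hc1.ne⟩

/-- one interval `j` with the largest lower bound; the other intervals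
pairwise overlap and split into `X` (overlapping `j`, `|X| = k-1`) and `B` (strictly
below `j`, `|B| = n-k ≥ 2`). Then `j` is in every feasible top-`k` set, the feasible
top-`k` sets are exactly `{j} ∪ A` for `(k-1)`-subsets `A ⊆ X ∪ B`, and the marginals
`p j = 1`, `p i = (k-1)/(n-1)` for `i ≠ j` are maximin optimal — and are not a 0-1
vector. -/
theorem single_top_interval_optimal (n k : ℕ) (hk : 2 ≤ k) (hkn : k + 2 ≤ n)
    (l u : Fin n → ℝ) (hvalid : ∀ i, l i ≤ u i)
    (j : Fin n) (X B : Finset (Fin n))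
    (hpart : X ∪ B = Finset.univ.erase j) (hdisj : Disjoint X B)
    (hjtop : ∀ i : Fin n, l i ≤ l j)
    (hX : ∀ x ∈ X, l j ≤ u x ∧ l x ≤ u j)
    (hB : ∀ b ∈ B, l j > u b)
    (hrest : ∀ x ∈ X ∪ B, ∀ y ∈ X ∪ B, x ≠ y → l x ≤ u y)
    (hXcard : X.card = k - 1) (hBcard : B.card = n - k) :
    (∀ T ∈ FeasibleTopK n k l u, j ∈ T) ∧
    (FeasibleTopK n k l u =
      {T | ∃ A ⊆ X ∪ B, A.card = k - 1 ∧ T = insert j A}) ∧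
    ((∀ i, 0 ≤ (fun i : Fin n => if i = j then (1 : ℝ) else ((k : ℝ) - 1) / ((n : ℝ) - 1)) i ∧
        (fun i : Fin n => if i = j then (1 : ℝ) else ((k : ℝ) - 1) / ((n : ℝ) - 1)) i ≤ 1) ∧
      (∑ i, (fun i : Fin n => if i = j then (1 : ℝ) else ((k : ℝ) - 1) / ((n : ℝ) - 1)) i = (k : ℝ)) ∧
      (∀ p : Fin n → ℝ, (∀ i, 0 ≤ p i ∧ p i ≤ 1) → ∑ i, p i = (k : ℝ) →
        wcObj n k l u p ≤
          wcObj n k l u (fun i => if i = j then (1 : ℝ) else ((k : ℝ) - 1) / ((n : ℝ) - 1)))) ∧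
    (∃ i : Fin n,
      (fun i : Fin n => if i = j then (1 : ℝ) else ((k : ℝ) - 1) / ((n : ℝ) - 1)) i ≠ 0 ∧
      (fun i : Fin n => if i = j then (1 : ℝ) else ((k : ℝ) - 1) / ((n : ℝ) - 1)) i ≠ 1) :=
  single_top_interval_optimal_general n k hk hkn l u hvalid j X B hpart hjtop hB hrest hXcard
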